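/- For multivariate Gaussian densities f₁ = N(μ₁, Σ₁) and f₂ = N(μ₂, Σ₂) on ℝᵈ and α ∈ ℝ such that αΣ₂ + (1−α)Σ₁ is positive definite, the integral ∫ f₁(x)^α f₂(x)^{1−α} dx equals det(αΣ₂ + (1−α)Σ₁)^{−1/2} · det(Σ₁)^{(1−α)/2} · det(Σ₂)^{α/2} · exp{ (α(α−1)/2) (μ₁−μ₂)ᵀ (αΣ₂ + (1−α)Σ₁)⁻¹ (μ₁−μ₂) }. -/

import Mathlib

open MeasureTheory Matrix Real

/-- Multivariate Gaussian density with mean `m` and covariance `C`. -/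
noncomputable def gaussPdf {d : ℕ} (m : Fin d → ℝ) (C : Matrix (Fin d) (Fin d) ℝ)
    (x : Fin d → ℝ) : ℝ :=
  (2 * Real.pi) ^ (-(d : ℝ) / 2) * C.det ^ (-(1 : ℝ) / 2) *
    Real.exp (-(1 / 2) * ((x - m) ⬝ᵥ C⁻¹.mulVec (x - m)))

/-!
The integrand is a constant times `exp (-½ Q x)` with
`Q x = α (x - μ₁)ᵀ S₁⁻¹ (x - μ₁) + (1 - α) (x - μ₂)ᵀ S₂⁻¹ (x - μ₂)`.
Writing `M = α S₂ + (1 - α) S₁` and `v = M⁻¹ (μ₂ - μ₁)`, the shift `x = y + μ₁ + (1 - α) S₁ v`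
kills the linear part of `Q`, leaving `yᵀ A y + α (1 - α) vᵀ M v` with
`A = α S₁⁻¹ + (1 - α) S₂⁻¹ = S₁⁻¹ M S₂⁻¹`. The matrix `A` is positive definite because,
after simultaneously diagonalising `S₁` and `S₂`, it is congruent to `M`. The remaining integral
is the standard Gaussian one, `∫ exp (-½ yᵀ A y) = (2π)^(d/2) det A^(-1/2)`, computed with the
change of variables `y ↦ A^(1/2) y`.
-/

namespace Matrix

variable {ι : Type*} [Fintype ι] [DecidableEq ι]

open scoped MatrixOrder in
lemma PosDef.exists_posDef_mul_self {S : Matrix ι ι ℝ} (hS : S.PosDef) :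
    ∃ R : Matrix ι ι ℝ, R.PosDef ∧ R * R = S :=
  ⟨CFC.sqrt S, hS.isStrictlyPositive.sqrt.posDef, CFC.sqrt_mul_sqrt_self S⟩

lemma PosDef.mul_mul_same_of_posDef {A R : Matrix ι ι ℝ} (hA : A.PosDef) (hR : R.PosDef) :
    (R * A * R).PosDef := by
  have := (hR.isUnit.posDef_star_left_conjugate_iff (x := A)).mpr hA
  rwa [star_eq_conjTranspose, hR.1.eq] at this

lemma mul_mul_eq_one_of_mul_self_eq_inv {R T : Matrix ι ι ℝ} (hT : IsUnit T.det)
    (h : R * R = T⁻¹) : R * T * R = 1 :=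
  mul_eq_one_comm.mp <| by rw [← Matrix.mul_assoc, h, nonsing_inv_mul _ hT]

lemma PosDef.smul_one_add_smul_inv {T : Matrix ι ι ℝ} (hT : T.PosDef) {a b : ℝ}
    (h : (a • T + b • 1).PosDef) : (a • 1 + b • T⁻¹).PosDef := by
  obtain ⟨U, hU, hUU⟩ := hT.inv.exists_posDef_mul_self
  have hconj : U * (a • T + b • 1) * U = a • 1 + b • T⁻¹ := by
    simp only [Matrix.mul_add, Matrix.add_mul, Matrix.mul_smul, Matrix.smul_mul, Matrix.mul_one,
      mul_mul_eq_one_of_mul_self_eq_inv hT.det_pos.ne'.isUnit hUU, hUU]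
  exact hconj ▸ h.mul_mul_same_of_posDef hU

lemma posDef_smul_inv_add_smul_inv {S₁ S₂ : Matrix ι ι ℝ} (hS₁ : S₁.PosDef) (hS₂ : S₂.PosDef)
    {a b : ℝ} (h : (a • S₂ + b • S₁).PosDef) : (a • S₁⁻¹ + b • S₂⁻¹).PosDef := by
  obtain ⟨R, hR, hRR⟩ := hS₁.inv.exists_posDef_mul_self
  have hRu : IsUnit R.det := hR.det_pos.ne'.isUnit
  set T := R * S₂ * R
  have hT : T.PosDef := hS₂.mul_mul_same_of_posDef hR
  have hconj₁ : R * (a • S₂ + b • S₁) * R = a • T + b • 1 := by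
    simp only [Matrix.mul_add, Matrix.add_mul, Matrix.mul_smul, Matrix.smul_mul, T,
      mul_mul_eq_one_of_mul_self_eq_inv hS₁.det_pos.ne'.isUnit hRR]
  have hRT : R * T⁻¹ * R = S₂⁻¹ := by
    simp only [T, Matrix.mul_inv_rev, ← Matrix.mul_assoc, mul_nonsing_inv _ hRu, Matrix.one_mul]
    rw [Matrix.mul_assoc, nonsing_inv_mul _ hRu, Matrix.mul_one]
  have hconj₂ : R * (a • 1 + b • T⁻¹) * R = a • S₁⁻¹ + b • S₂⁻¹ := by
    simp only [Matrix.mul_add, Matrix.add_mul, Matrix.mul_smul, Matrix.smul_mul, Matrix.mul_one,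
      hRR, hRT]
  exact hconj₂ ▸
    (hT.smul_one_add_smul_inv (hconj₁ ▸ h.mul_mul_same_of_posDef hR)).mul_mul_same_of_posDef hR

lemma det_smul_inv_add_smul_inv {S₁ S₂ : Matrix ι ι ℝ} (h₁ : IsUnit S₁.det)
    (h₂ : IsUnit S₂.det) (a b : ℝ) :
    (a • S₁⁻¹ + b • S₂⁻¹).det = (a • S₂ + b • S₁).det / (S₁.det * S₂.det) := by
  have : a • S₁⁻¹ + b • S₂⁻¹ = S₁⁻¹ * (a • S₂ + b • S₁) * S₂⁻¹ := by
    simp only [Matrix.mul_add, Matrix.add_mul, Matrix.mul_smul, Matrix.smul_mul,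
      mul_nonsing_inv_cancel_right _ _ h₂, nonsing_inv_mul _ h₁, Matrix.one_mul]
  rw [this, det_mul, det_mul, det_nonsing_inv, det_nonsing_inv, Ring.inverse_eq_inv']
  ring

lemma add_mulVec_dotProduct_inv_mulVec_add_mulVec {S : Matrix ι ι ℝ} (hS : S.IsSymm)
    (hdet : IsUnit S.det) (y w : ι → ℝ) :
    (y + S *ᵥ w) ⬝ᵥ S⁻¹ *ᵥ (y + S *ᵥ w) = y ⬝ᵥ S⁻¹ *ᵥ y + 2 * (y ⬝ᵥ w) + w ⬝ᵥ S *ᵥ w := by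
  have hcross : S *ᵥ w ⬝ᵥ S⁻¹ *ᵥ y = y ⬝ᵥ w := by
    rw [dotProduct_mulVec, ← vecMul_transpose, hS.eq, vecMul_vecMul, mul_nonsing_inv _ hdet,
      vecMul_one, dotProduct_comm]
  simp only [mulVec_add, dotProduct_add, add_dotProduct, mulVec_mulVec, nonsing_inv_mul _ hdet,
    one_mulVec, hcross, dotProduct_comm (S *ᵥ w) w]
  ring

end Matrix

section GaussianIntegral

variable {ι : Type*} [Fintype ι]

lemma integral_exp_neg_half_dotProduct_self :
    ∫ x : ι → ℝ, exp (-(1 / 2) * (x ⬝ᵥ x)) = (2 * π) ^ (Fintype.card ι / 2 : ℝ) := by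
  have h := GaussianFourier.integral_rexp_neg_mul_sq_norm (V := EuclideanSpace ℝ ι)
    (b := 1 / 2) (by norm_num)
  rw [← (EuclideanSpace.volume_preserving_symm_measurableEquiv_toLp ι).symm.integral_comp'] at h
  simp only [EuclideanSpace.real_norm_sq_eq, finrank_euclideanSpace] at h
  simpa [dotProduct, ← sq, div_div_eq_mul_div, mul_comm] using h

variable [DecidableEq ι]

lemma integral_comp_mulVec {E : Type*} [NormedAddCommGroup E] [NormedSpace ℝ E]
    {R : Matrix ι ι ℝ} (hR : R.det ≠ 0) (g : (ι → ℝ) → E) :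
    ∫ x, g (R *ᵥ x) = |R.det|⁻¹ • ∫ y, g y := by
  have hdet : LinearMap.det (toLin' R) ≠ 0 := by rwa [LinearMap.det_toLin']
  have hemb : MeasurableEmbedding (toLin' R) :=
    ((toLin' R).equivOfDetNeZero hdet).toContinuousLinearEquiv.toHomeomorph.measurableEmbedding
  change ∫ x, g (toLin' R x) = _
  rw [← hemb.integral_map, Measure.map_linearMap_addHaar_pi_eq_smul_addHaar hdet,
    integral_smul_measure, LinearMap.det_toLin', ENNReal.toReal_ofReal (abs_nonneg _), abs_inv]

lemma integral_exp_neg_half_dotProduct_mulVec {A : Matrix ι ι ℝ} (hA : A.PosDef) :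
    ∫ x : ι → ℝ, exp (-(1 / 2) * (x ⬝ᵥ A *ᵥ x))
      = (2 * π) ^ (Fintype.card ι / 2 : ℝ) * A.det ^ (-(1 : ℝ) / 2) := by
  obtain ⟨R, hR, rfl⟩ := hA.exists_posDef_mul_self
  have hquad (x : ι → ℝ) : x ⬝ᵥ (R * R) *ᵥ x = R *ᵥ x ⬝ᵥ R *ᵥ x := by
    rw [← mulVec_mulVec, dotProduct_mulVec, ← mulVec_transpose,
      (isHermitian_iff_isSymm.mp hR.1).eq]
  have hdet : (R * R).det ^ (-(1 : ℝ) / 2) = |R.det|⁻¹ := by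
    rw [det_mul, ← sq, abs_of_pos hR.det_pos, ← rpow_natCast, ← rpow_mul hR.det_pos.le]
    norm_num [rpow_neg_one]
  simp_rw [hquad]
  rw [integral_comp_mulVec hR.det_pos.ne' (fun y => exp (-(1 / 2) * (y ⬝ᵥ y))),
    integral_exp_neg_half_dotProduct_self, hdet, smul_eq_mul, mul_comm]

lemma integral_exp_neg_half_smul_quad_add_smul_quad {S₁ S₂ : Matrix ι ι ℝ} (hS₁ : S₁.PosDef)
    (hS₂ : S₂.PosDef) {a b : ℝ} (hM : (a • S₂ + b • S₁).PosDef) (μ₁ μ₂ : ι → ℝ) :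
    ∫ x, exp (-(1 / 2) *
        (a * ((x - μ₁) ⬝ᵥ S₁⁻¹ *ᵥ (x - μ₁)) + b * ((x - μ₂) ⬝ᵥ S₂⁻¹ *ᵥ (x - μ₂))))
      = (2 * π) ^ (Fintype.card ι / 2 : ℝ) * S₁.det ^ (1 / 2 : ℝ) * S₂.det ^ (1 / 2 : ℝ) *
        (a • S₂ + b • S₁).det ^ (-(1 : ℝ) / 2) *
        exp (-(a * b / 2) * ((μ₁ - μ₂) ⬝ᵥ (a • S₂ + b • S₁)⁻¹ *ᵥ (μ₁ - μ₂))) := by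
  set M := a • S₂ + b • S₁
  set A := a • S₁⁻¹ + b • S₂⁻¹
  set v := M⁻¹ *ᵥ (μ₂ - μ₁)
  have hMv : M *ᵥ v = μ₂ - μ₁ := by
    rw [mulVec_mulVec, mul_nonsing_inv _ hM.det_pos.ne'.isUnit, one_mulVec]
  have hMv' : M *ᵥ v = S₂ *ᵥ (a • v) + S₁ *ᵥ (b • v) := by
    simp only [M, add_mulVec, smul_mulVec, mulVec_smul]
  have hvMv : v ⬝ᵥ M *ᵥ v = (μ₁ - μ₂) ⬝ᵥ M⁻¹ *ᵥ (μ₁ - μ₂) := by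
    rw [hMv, dotProduct_comm, ← neg_sub μ₂ μ₁, mulVec_neg, neg_dotProduct, dotProduct_neg, neg_neg]
  set m := μ₁ + S₁ *ᵥ (b • v)
  have hsquare (y : ι → ℝ) : a * ((y + m - μ₁) ⬝ᵥ S₁⁻¹ *ᵥ (y + m - μ₁))
      + b * ((y + m - μ₂) ⬝ᵥ S₂⁻¹ *ᵥ (y + m - μ₂)) = y ⬝ᵥ A *ᵥ y + a * b * (v ⬝ᵥ M *ᵥ v) := by
    have hμ₂ : μ₂ = μ₁ + (S₂ *ᵥ (a • v) + S₁ *ᵥ (b • v)) := by rw [← hMv', hMv]; abel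
    have h₁ : y + m - μ₁ = y + S₁ *ᵥ (b • v) := by simp only [m]; abel
    have h₂ : y + m - μ₂ = y + S₂ *ᵥ (-(a • v)) := by
      rw [mulVec_neg, hμ₂]; simp only [m]; abel
    rw [h₁, h₂, add_mulVec_dotProduct_inv_mulVec_add_mulVec (isHermitian_iff_isSymm.mp hS₁.1)
      hS₁.det_pos.ne'.isUnit, add_mulVec_dotProduct_inv_mulVec_add_mulVec
      (isHermitian_iff_isSymm.mp hS₂.1) hS₂.det_pos.ne'.isUnit, hMv']
    simp only [A, add_mulVec, smul_mulVec, dotProduct_add, dotProduct_smul, mulVec_smul,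
      mulVec_neg, dotProduct_neg, neg_dotProduct, smul_dotProduct, smul_eq_mul]
    ring
  have hdetA : A.det ^ (-(1 : ℝ) / 2)
      = S₁.det ^ (1 / 2 : ℝ) * S₂.det ^ (1 / 2 : ℝ) * M.det ^ (-(1 : ℝ) / 2) := by
    have hs₁ := hS₁.det_pos
    have hs₂ := hS₂.det_pos
    rw [det_smul_inv_add_smul_inv hs₁.ne'.isUnit hs₂.ne'.isUnit, div_rpow hM.det_pos.le
      (by positivity), mul_rpow hs₁.le hs₂.le, neg_div, rpow_neg hs₁.le, rpow_neg hs₂.le,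
      div_eq_mul_inv, mul_inv, inv_inv, inv_inv]
    ring
  calc _ = ∫ y, exp (-(1 / 2) * (a * ((y + m - μ₁) ⬝ᵥ S₁⁻¹ *ᵥ (y + m - μ₁))
        + b * ((y + m - μ₂) ⬝ᵥ S₂⁻¹ *ᵥ (y + m - μ₂)))) :=
        (integral_add_right_eq_self (fun x => exp (-(1 / 2) *
          (a * ((x - μ₁) ⬝ᵥ S₁⁻¹ *ᵥ (x - μ₁)) + b * ((x - μ₂) ⬝ᵥ S₂⁻¹ *ᵥ (x - μ₂))))) m).symm
    _ = ∫ y, exp (-(a * b / 2) * (v ⬝ᵥ M *ᵥ v)) * exp (-(1 / 2) * (y ⬝ᵥ A *ᵥ y)) := by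
        congr 1 with y
        rw [hsquare, ← exp_add]
        ring_nf
    _ = _ := by
        rw [integral_const_mul, integral_exp_neg_half_dotProduct_mulVec
          (posDef_smul_inv_add_smul_inv hS₁ hS₂ hM), hdetA, hvMv]
        ring

end GaussianIntegral

lemma gaussPdf_rpow {d : ℕ} (m : Fin d → ℝ) {C : Matrix (Fin d) (Fin d) ℝ} (hC : 0 ≤ C.det)
    (β : ℝ) (x : Fin d → ℝ) :
    gaussPdf m C x ^ β = (2 * π) ^ (-(d : ℝ) / 2 * β) * C.det ^ (-β / 2) *
      exp (-(β / 2) * ((x - m) ⬝ᵥ C⁻¹ *ᵥ (x - m))) := by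
  have h2π : 0 ≤ 2 * π := by positivity
  rw [gaussPdf, mul_rpow (by positivity) (exp_nonneg _), mul_rpow (by positivity) (by positivity),
    ← rpow_mul h2π, ← rpow_mul hC, ← exp_mul]
  ring_nf

lemma gaussPdf_rpow_mul_gaussPdf_rpow {d : ℕ} (μ₁ μ₂ : Fin d → ℝ)
    {S₁ S₂ : Matrix (Fin d) (Fin d) ℝ} (h₁ : 0 ≤ S₁.det) (h₂ : 0 ≤ S₂.det) (α : ℝ)
    (x : Fin d → ℝ) :
    gaussPdf μ₁ S₁ x ^ α * gaussPdf μ₂ S₂ x ^ (1 - α)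
      = (2 * π) ^ (-(d : ℝ) / 2) * S₁.det ^ (-α / 2) * S₂.det ^ (-(1 - α) / 2) *
        exp (-(1 / 2) * (α * ((x - μ₁) ⬝ᵥ S₁⁻¹ *ᵥ (x - μ₁))
          + (1 - α) * ((x - μ₂) ⬝ᵥ S₂⁻¹ *ᵥ (x - μ₂)))) := by
  have h2π : (2 * π) ^ (-(d : ℝ) / 2)
      = (2 * π) ^ (-(d : ℝ) / 2 * α) * (2 * π) ^ (-(d : ℝ) / 2 * (1 - α)) := by
    rw [← rpow_add (by positivity)]; ring_nf
  rw [gaussPdf_rpow μ₁ h₁, gaussPdf_rpow μ₂ h₂, h2π, mul_add, exp_add]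
  ring_nf

/-- Closed form of `∫ f₁^α f₂^(1-α)` for multivariate Gaussian densities. -/
theorem gaussian_power_product_integral {d : ℕ}
    (μ₁ μ₂ : Fin d → ℝ) (S₁ S₂ : Matrix (Fin d) (Fin d) ℝ)
    (hS₁ : S₁.PosDef) (hS₂ : S₂.PosDef) (α : ℝ)
    (hmix : (α • S₂ + (1 - α) • S₁).PosDef) :
    ∫ x : Fin d → ℝ, (gaussPdf μ₁ S₁ x) ^ α * (gaussPdf μ₂ S₂ x) ^ (1 - α)
      = (α • S₂ + (1 - α) • S₁).det ^ (-(1 : ℝ) / 2) *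
        S₁.det ^ ((1 - α) / 2) * S₂.det ^ (α / 2) *
        Real.exp ((α * (α - 1) / 2) *
          ((μ₁ - μ₂) ⬝ᵥ (α • S₂ + (1 - α) • S₁)⁻¹.mulVec (μ₁ - μ₂))) := by
  have hs₁ := hS₁.det_pos
  have hs₂ := hS₂.det_pos
  simp_rw [gaussPdf_rpow_mul_gaussPdf_rpow μ₁ μ₂ hs₁.le hs₂.le α]
  rw [integral_const_mul, integral_exp_neg_half_smul_quad_add_smul_quad hS₁ hS₂ hmix,
    Fintype.card_fin]
  have h2π : (2 * π) ^ (-(d : ℝ) / 2) * (2 * π) ^ (d / 2 : ℝ) = 1 := by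
    rw [← rpow_add (by positivity)]; ring_nf; exact rpow_zero _
  have hS₁pow : S₁.det ^ (-α / 2) * S₁.det ^ (1 / 2 : ℝ) = S₁.det ^ ((1 - α) / 2) := by
    rw [← rpow_add hs₁]; ring_nf
  have hS₂pow : S₂.det ^ (-(1 - α) / 2) * S₂.det ^ (1 / 2 : ℝ) = S₂.det ^ (α / 2) := by
    rw [← rpow_add hs₂]; ring_nf
  rw [← hS₁pow, ← hS₂pow, show α * (α - 1) / 2 = -(α * (1 - α) / 2) by ring]
  linear_combination (S₁.det ^ (-α / 2) * S₁.det ^ (1 / 2 : ℝ) * S₂.det ^ (-(1 - α) / 2) *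
    S₂.det ^ (1 / 2 : ℝ) * (α • S₂ + (1 - α) • S₁).det ^ (-(1 : ℝ) / 2) *
    exp (-(α * (1 - α) / 2) * ((μ₁ - μ₂) ⬝ᵥ (α • S₂ + (1 - α) • S₁)⁻¹ *ᵥ (μ₁ - μ₂)))) * h2π
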